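/- Population risk dominates the distance discrepancy (Lemma A.6). Fix d ≥ 1, σ > 0, M ≥ √d, and fix X⋆, X ∈ ([0,1]^d)ⁿ. With Rₙ⁰(X) = N⁻¹ Σ_{i<j} g(r_{ij}(X); r_{ij}⋆) and Δ_dist(X, X⋆) = N⁻¹ Σ_{i<j} (r_{ij}(X) − r_{ij}⋆)², one has Rₙ⁰(X) − Rₙ⁰(X⋆) ≥ c_sc · Δ_dist(X, X⋆), where c_sc = (Φ(M/(2σ)) − 1/2)²/(2M²). -/

import Mathlib

open MeasureTheory ProbabilityTheory Filter
open scoped ENNReal NNReal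

noncomputable section

/-- The standard normal probability density function φ. -/
def stdPDF (x : ℝ) : ℝ := Real.exp (-(x ^ 2) / 2) / Real.sqrt (2 * Real.pi)

/-- The standard normal cumulative distribution function Φ. -/
def stdCDF (x : ℝ) : ℝ := ∫ t in Set.Iic x, stdPDF t

/-- The standard Gaussian measure on ℝ. -/
def stdGaussian : Measure ℝ := gaussianReal 0 1

/-- `T_M([u]₊) = min{max{u,0}, M}`. -/
def capPos (M u : ℝ) : ℝ := min M (max u 0)

/-- The density `q_{M,r}(y)` of the capped observation with respect to
`ν = δ₀ + Leb|_(0,M) + δ_M`. -/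
def qDen (σ M r y : ℝ) : ℝ :=
  if y = 0 then stdCDF (-r / σ)
  else if y = M then 1 - stdCDF ((M - r) / σ)
  else σ⁻¹ * stdPDF ((y - r) / σ)

/-- The loss `ℓ_M(y, r) = - log q_{M,r}(y)`. -/
def lossM (σ M y r : ℝ) : ℝ := - Real.log (qDen σ M r y)

/-- The reference measure `ν = δ₀ + Leb|_(0,M) + δ_M`. -/
def refMeas (M : ℝ) : Measure ℝ :=
  Measure.dirac 0 + volume.restrict (Set.Ioo 0 M) + Measure.dirac M

/-- The law `P_r` of the capped observation `T_M([r + σZ]₊)`. -/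
def cappedLaw (σ M r : ℝ) : Measure ℝ :=
  Measure.map (fun z => capPos M (r + σ * z)) stdGaussian

/-- The capped mean `μ_M(r) = E[T_M([r + σZ]₊)]`. -/
def cappedMean (σ M r : ℝ) : ℝ := ∫ z, capPos M (r + σ * z) ∂stdGaussian

/-- The population loss `g(r; r⋆) = E[ℓ_M(T_M([r⋆+σZ]₊), r)]`. -/
def popLoss (σ M r rstar : ℝ) : ℝ :=
  ∫ z, lossM σ M (capPos M (rstar + σ * z)) r ∂stdGaussian

/-- Euclidean distance on `Fin d → ℝ`. -/
def eDist {d : ℕ} (x y : Fin d → ℝ) : ℝ := Real.sqrt (∑ k, (x k - y k) ^ 2)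

/-- The cube `([0,1]^d)^n` of configurations of `n` points. -/
def cube (n d : ℕ) : Set (Fin n → Fin d → ℝ) :=
  {X | ∀ i k, X i k ∈ Set.Icc (0 : ℝ) 1}

/-- Number of unordered pairs `N = n(n-1)/2` as a real. -/
def numPairs (n : ℕ) : ℝ := (n : ℝ) * ((n : ℝ) - 1) / 2

/-- Sum over unordered pairs `i < j`. -/
def pairSum {n : ℕ} (f : Fin n → Fin n → ℝ) : ℝ :=
  ∑ i : Fin n, ∑ j : Fin n, if i < j then f i j else 0

/-- The pairwise distances `r_{ij}(X) = ‖x_i - x_j‖`. -/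
def rdist {n d : ℕ} (X : Fin n → Fin d → ℝ) (i j : Fin n) : ℝ := eDist (X i) (X j)

/-- The capped dissimilarities `D̃_{ij} = T_M([r⋆_{ij} + σ Z_{ij}]₊)`. -/
def cappedD {n d : ℕ} (σ M : ℝ) (Xstar : Fin n → Fin d → ℝ) (Z : Fin n → Fin n → ℝ)
    (i j : Fin n) : ℝ := capPos M (rdist Xstar i j + σ * Z i j)

/-- The empirical risk `Rₙ(X)`. -/
def empRisk {n d : ℕ} (σ M : ℝ) (Dt : Fin n → Fin n → ℝ) (X : Fin n → Fin d → ℝ) : ℝ :=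
  (numPairs n)⁻¹ * pairSum fun i j => lossM σ M (Dt i j) (rdist X i j)

/-- The population risk `Rₙ⁰(X)`. -/
def popRisk {n d : ℕ} (σ M : ℝ) (Xstar X : Fin n → Fin d → ℝ) : ℝ :=
  (numPairs n)⁻¹ * pairSum fun i j => popLoss σ M (rdist X i j) (rdist Xstar i j)

/-- The distance discrepancy `Δ_dist(X, X⋆)`. -/
def distDiscrep {n d : ℕ} (X Xstar : Fin n → Fin d → ℝ) : ℝ :=
  (numPairs n)⁻¹ * pairSum fun i j => (rdist X i j - rdist Xstar i j) ^ 2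

/-- The centering matrix `J = I - n⁻¹ 11ᵀ`. -/
def centerMat (n : ℕ) : Matrix (Fin n) (Fin n) ℝ :=
  1 - ((n : ℝ)⁻¹) • Matrix.of (fun _ _ => (1 : ℝ))

/-- A configuration viewed as an `n × d` matrix. -/
def toMat {n d : ℕ} (X : Fin n → Fin d → ℝ) : Matrix (Fin n) (Fin d) ℝ := Matrix.of X

/-- The Frobenius norm of a matrix. -/
def frobNorm {m k : Type*} [Fintype m] [Fintype k] (A : Matrix m k ℝ) : ℝ :=
  Real.sqrt (∑ i, ∑ j, (A i j) ^ 2)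

/-- The squared-distance matrix `D²(X)`. -/
def sqDistMat {n d : ℕ} (X : Fin n → Fin d → ℝ) : Matrix (Fin n) (Fin n) ℝ :=
  Matrix.of fun i j => (rdist X i j) ^ 2

/-- The centered Gram matrix `G(X) = -(1/2) J D²(X) J`. -/
def gramMat {n d : ℕ} (X : Fin n → Fin d → ℝ) : Matrix (Fin n) (Fin n) ℝ :=
  (-(1 / 2 : ℝ)) • (centerMat n * sqDistMat X * centerMat n)

/-- The smallest singular value of an `n × d` matrix: the infimum of `‖Av‖` over
unit vectors `v`. -/
def sMin {n d : ℕ} (A : Matrix (Fin n) (Fin d) ℝ) : ℝ :=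
  sInf {t | ∃ v : Fin d → ℝ, ∑ k, v k ^ 2 = 1 ∧ t = Real.sqrt (∑ i, (A.mulVec v i) ^ 2)}

/-- The orbit distance `d_G(X, X⋆)`. -/
def orbitDist {n d : ℕ} (X Xstar : Fin n → Fin d → ℝ) : ℝ :=
  sInf {t | ∃ Q : Matrix (Fin d) (Fin d) ℝ, Q ∈ Matrix.orthogonalGroup (Fin d) ℝ ∧
    t = (Real.sqrt n)⁻¹ *
      frobNorm (centerMat n * toMat X - centerMat n * toMat Xstar * Q)}

/-- The uniform distribution on `[0,1]^d`. -/
def uniformCube (d : ℕ) : Measure (Fin d → ℝ) :=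
  Measure.pi fun _ => volume.restrict (Set.Icc 0 1)

/-- The design measure: `n` i.i.d. uniform points on `[0,1]^d`. -/
def designMeasure (n d : ℕ) : Measure (Fin n → Fin d → ℝ) :=
  Measure.pi fun _ => uniformCube d

/-- The noise measure: i.i.d. standard Gaussian entries. -/
def noiseMeasure (n : ℕ) : Measure (Fin n → Fin n → ℝ) :=
  Measure.pi fun _ => Measure.pi fun _ => stdGaussian

/-- The joint law of `(X⋆, Z)`. -/
def jointMeasure (n d : ℕ) :
    Measure ((Fin n → Fin d → ℝ) × (Fin n → Fin n → ℝ)) :=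
  (designMeasure n d).prod (noiseMeasure n)

/-- The prior measure (supported on the cube, with Lebesgue density `π₀`). -/
def priorMeas (d : ℕ) (pri : (n : ℕ) → (Fin n → Fin d → ℝ) → ℝ) (n : ℕ) :
    Measure (Fin n → Fin d → ℝ) :=
  ((volume : Measure (Fin n → Fin d → ℝ)).restrict (cube n d)).withDensity
    fun X => ENNReal.ofReal (pri n X)

/-- The (normalized) Gibbs measure ∝ `prior(dX) exp(-N R(X))`. -/
def gibbs {S : Type*} [MeasurableSpace S] (prior : Measure S) (R : S → ℝ) (Nn : ℝ) :
    Measure S :=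
  ((prior.withDensity fun X => ENNReal.ofReal (Real.exp (-Nn * R X))) Set.univ)⁻¹ •
    prior.withDensity fun X => ENNReal.ofReal (Real.exp (-Nn * R X))

/-- Total variation distance between measures. -/
def tvDist {S : Type*} [MeasurableSpace S] (μ ν : Measure S) : ℝ :=
  ⨆ A : {A : Set S // MeasurableSet A}, |(μ A).toReal - (ν A).toReal|

/-- `m`-step iterate of a Markov kernel. -/
def kIter {S : Type*} [MeasurableSpace S] (P : Kernel S S) : ℕ → Kernel S S
  | 0 => Kernel.id
  | m + 1 => Kernel.comp P (kIter P m)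



lemma stdPDF_eq (x : ℝ) : stdPDF x = gaussianPDFReal 0 1 x := by
  simp [stdPDF, gaussianPDFReal, div_eq_inv_mul]

lemma stdPDF_pos (x : ℝ) : 0 < stdPDF x := by
  rw [stdPDF_eq]; exact gaussianPDFReal_pos 0 1 x one_ne_zero

lemma stdPDF_cont : Continuous stdPDF := by
  unfold stdPDF
  exact (Real.continuous_exp.comp (by continuity)).div_const _

lemma stdPDF_meas : Measurable stdPDF := stdPDF_cont.measurable

lemma integrable_stdPDF : Integrable stdPDF := by
  have := integrable_gaussianPDFReal 0 1
  apply this.congr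
  filter_upwards with x using (stdPDF_eq x).symm

lemma integral_stdPDF : ∫ x, stdPDF x = 1 := by
  simp_rw [stdPDF_eq]
  exact integral_gaussianPDFReal_eq_one 0 one_ne_zero

lemma integral_stdGaussian (f : ℝ → ℝ) :
    ∫ z, f z ∂stdGaussian = ∫ z, stdPDF z * f z := by
  rw [_root_.stdGaussian, gaussianReal_of_var_ne_zero 0 one_ne_zero]
  have h : (gaussianPDF 0 1) = fun x => ((Real.toNNReal (gaussianPDFReal 0 1 x) : ℝ≥0) : ℝ≥0∞) := by
    ext x; rfl
  rw [h, integral_withDensity_eq_integral_smul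
    ((measurable_gaussianPDFReal 0 1).real_toNNReal) f]
  congr 1; ext x
  rw [NNReal.smul_def, smul_eq_mul, Real.coe_toNNReal _ (gaussianPDFReal_nonneg 0 1 x), stdPDF_eq]

lemma intOn_stdPDF (s : Set ℝ) : IntegrableOn stdPDF s := integrable_stdPDF.integrableOn

lemma stdCDF_add_Ioi (x : ℝ) : stdCDF x + ∫ t in Set.Ioi x, stdPDF t = 1 := by
  have := MeasureTheory.integral_add_compl (measurableSet_Iic (a := x)) integrable_stdPDF
  rw [Set.compl_Iic] at this
  rw [stdCDF, this, integral_stdPDF]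

lemma stdCDF_pos (x : ℝ) : 0 < stdCDF x := by
  rw [stdCDF]
  rw [setIntegral_pos_iff_support_of_nonneg_ae
    (Filter.Eventually.of_forall (fun t => (stdPDF_pos t).le)) (intOn_stdPDF _)]
  have : Function.support stdPDF = Set.univ := by
    ext t; simp [Function.mem_support, (stdPDF_pos t).ne']
  rw [this, Set.univ_inter]
  simp [Real.volume_Iic]

lemma integral_Ioi_stdPDF_pos (x : ℝ) : 0 < ∫ t in Set.Ioi x, stdPDF t := by
  rw [setIntegral_pos_iff_support_of_nonneg_ae
    (Filter.Eventually.of_forall (fun t => (stdPDF_pos t).le)) (intOn_stdPDF _)]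
  have : Function.support stdPDF = Set.univ := by
    ext t; simp [Function.mem_support, (stdPDF_pos t).ne']
  rw [this, Set.univ_inter]
  simp [Real.volume_Ioi]

lemma stdCDF_lt_one (x : ℝ) : stdCDF x < 1 := by
  have h := stdCDF_add_Ioi x
  have := integral_Ioi_stdPDF_pos x
  linarith

lemma stdCDF_sub (a b : ℝ) : stdCDF b - stdCDF a = ∫ t in a..b, stdPDF t := by
  rw [stdCDF, stdCDF]
  exact intervalIntegral.integral_Iic_sub_Iic (intOn_stdPDF _) (intOn_stdPDF _)

lemma stdCDF_mono : Monotone stdCDF := by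
  intro a b hab
  have h := stdCDF_sub a b
  have h2 : 0 ≤ ∫ t in a..b, stdPDF t :=
    intervalIntegral.integral_nonneg hab (fun t _ => (stdPDF_pos t).le)
  linarith

lemma stdPDF_even (x : ℝ) : stdPDF (-x) = stdPDF x := by simp [stdPDF]

lemma stdCDF_neg (x : ℝ) : stdCDF (-x) = 1 - stdCDF x := by
  have h1 : stdCDF (-x) = ∫ t in Set.Iic (-x), stdPDF (-t) := by
    rw [stdCDF]; congr 1; ext t; rw [stdPDF_even]
  rw [h1, integral_comp_neg_Iic, neg_neg]
  have := stdCDF_add_Ioi x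
  linarith

lemma stdCDF_zero : stdCDF 0 = 1 / 2 := by
  have := stdCDF_neg 0
  rw [neg_zero] at this
  linarith

lemma hasDerivAt_stdCDF (x : ℝ) : HasDerivAt stdCDF (stdPDF x) x := by
  have h : ∀ y, stdCDF y = stdCDF 0 + ∫ t in (0:ℝ)..y, stdPDF t := by
    intro y; have := stdCDF_sub 0 y; linarith
  have hd : HasDerivAt (fun y => stdCDF 0 + ∫ t in (0:ℝ)..y, stdPDF t) (stdPDF x) x := by
    apply HasDerivAt.const_add
    exact intervalIntegral.integral_hasDerivAt_right
      (integrable_stdPDF.intervalIntegrable)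
      (stdPDF_cont.stronglyMeasurableAtFilter _ _) stdPDF_cont.continuousAt
  have heq : stdCDF = fun y => stdCDF 0 + ∫ t in (0:ℝ)..y, stdPDF t := funext h
  rw [heq]
  exact hd

lemma integral_Ioo_stdPDF {a b : ℝ} (hab : a ≤ b) :
    ∫ t in Set.Ioo a b, stdPDF t = stdCDF b - stdCDF a := by
  rw [stdCDF_sub, intervalIntegral.integral_of_le hab,
    ← MeasureTheory.integral_Ioc_eq_integral_Ioo]

lemma hasDerivAt_stdPDF (x : ℝ) : HasDerivAt stdPDF (-x * stdPDF x) x := by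
  unfold stdPDF
  have h1 : HasDerivAt (fun y : ℝ => -(y ^ 2) / 2) (-x) x := by
    have : HasDerivAt (fun y : ℝ => y ^ 2) (2 * x) x := by
      simpa using (hasDerivAt_pow 2 x)
    have := this.neg.div_const 2
    exact this.congr_deriv (by ring)
  have h2 := (h1.exp).div_const (Real.sqrt (2 * Real.pi))
  exact h2.congr_deriv (by ring)

lemma integral_Ioo_id_stdPDF {a b : ℝ} (hab : a ≤ b) :
    ∫ t in Set.Ioo a b, t * stdPDF t = stdPDF a - stdPDF b := by
  have h : ∀ t ∈ Set.uIcc a b, HasDerivAt (fun y => -stdPDF y) (t * stdPDF t) t := by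
    intro t _
    have := (hasDerivAt_stdPDF t).neg
    exact this.congr_deriv (by ring)
  have hint : IntervalIntegrable (fun t => t * stdPDF t) volume a b := by
    apply ContinuousOn.intervalIntegrable
    exact (continuous_id.mul stdPDF_cont).continuousOn
  have := intervalIntegral.integral_eq_sub_of_hasDerivAt h hint
  rw [intervalIntegral.integral_of_le hab, MeasureTheory.integral_Ioc_eq_integral_Ioo] at this
  rw [this]; ring

lemma capPos_mem_Icc {M u : ℝ} (hM : 0 ≤ M) : capPos M u ∈ Set.Icc 0 M :=
  ⟨le_min hM (le_max_right u 0), min_le_left _ _⟩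

lemma capPos_of_le {M u : ℝ} (hM : 0 ≤ M) (h : u ≤ 0) : capPos M u = 0 := by
  rw [capPos, max_eq_right h, min_eq_right hM]

lemma capPos_of_ge {M u : ℝ} (hM : 0 ≤ M) (h : M ≤ u) : capPos M u = M := by
  rw [capPos, max_eq_left (hM.trans h), min_eq_left h]

lemma capPos_of_mem {M u : ℝ} (h0 : 0 ≤ u) (hM : u ≤ M) : capPos M u = u := by
  rw [capPos, max_eq_left h0, min_eq_right hM]

/-- The workhorse: splitting the expectation of `u (capPos M (r + σ z))` into
the two atoms and the continuous part. -/
lemma split_integral (σ M r : ℝ) (hσ : 0 < σ) (hM : 0 < M) (u : ℝ → ℝ)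
    (hu : Measurable u) (C : ℝ) (hC : ∀ y ∈ Set.Icc (0:ℝ) M, |u y| ≤ C) :
    ∫ z, u (capPos M (r + σ * z)) ∂stdGaussian
      = u 0 * stdCDF (-r / σ) + u M * (1 - stdCDF ((M - r) / σ))
        + ∫ z in Set.Ioo (-r / σ) ((M - r) / σ), u (r + σ * z) * stdPDF z := by
  set α := -r / σ with hα
  set β := (M - r) / σ with hβ
  have hαβ : α < β := by
    rw [hα, hβ]
    apply div_lt_div_of_pos_right ?_ hσ
    linarith
  have hcontz : Continuous fun z : ℝ => capPos M (r + σ * z) := by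
    unfold capPos
    exact continuous_const.min ((continuous_const.add (continuous_const.mul continuous_id)).max continuous_const)
  have hmeas : Measurable fun z : ℝ => stdPDF z * u (capPos M (r + σ * z)) :=
    stdPDF_meas.mul (hu.comp hcontz.measurable)
  have hint : Integrable fun z : ℝ => stdPDF z * u (capPos M (r + σ * z)) := by
    apply Integrable.mono' (integrable_stdPDF.const_mul C) hmeas.aestronglyMeasurable
    filter_upwards with z
    rw [norm_mul, Real.norm_eq_abs, Real.norm_eq_abs, abs_of_pos (stdPDF_pos z)]
    calc stdPDF z * |u (capPos M (r + σ * z))| ≤ stdPDF z * C := by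
          apply mul_le_mul_of_nonneg_left (hC _ (capPos_mem_Icc hM.le)) (stdPDF_pos z).le
      _ = C * stdPDF z := by ring
  rw [integral_stdGaussian]
  have hsplit1 : ∫ z, stdPDF z * u (capPos M (r + σ * z))
      = (∫ z in Set.Iic α, stdPDF z * u (capPos M (r + σ * z)))
        + ∫ z in Set.Ioi α, stdPDF z * u (capPos M (r + σ * z)) := by
    rw [← MeasureTheory.integral_add_compl (measurableSet_Iic (a := α)) hint, Set.compl_Iic]
  have hsplit2 : ∫ z in Set.Ioi α, stdPDF z * u (capPos M (r + σ * z))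
      = (∫ z in Set.Ioo α β, stdPDF z * u (capPos M (r + σ * z)))
        + ∫ z in Set.Ici β, stdPDF z * u (capPos M (r + σ * z)) := by
    rw [← Set.Ioo_union_Ici_eq_Ioi hαβ]
    rw [MeasureTheory.setIntegral_union ?_ measurableSet_Ici hint.integrableOn hint.integrableOn]
    rw [Set.disjoint_left]
    intro z hz1 hz2
    exact absurd (hz1.2) (not_lt.mpr hz2)
  have hIic : ∫ z in Set.Iic α, stdPDF z * u (capPos M (r + σ * z))
      = u 0 * stdCDF α := by
    have hcongr : ∀ z ∈ Set.Iic α, stdPDF z * u (capPos M (r + σ * z)) = stdPDF z * u 0 := by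
      intro z hz
      have hz' : z ≤ -r / σ := hz
      have h1 : r + σ * z ≤ 0 := by
        have := (le_div_iff₀ hσ).mp hz'
        nlinarith
      rw [capPos_of_le hM.le h1]
    rw [MeasureTheory.setIntegral_congr_fun measurableSet_Iic hcongr,
      MeasureTheory.integral_mul_const, stdCDF]
    ring
  have hIci : ∫ z in Set.Ici β, stdPDF z * u (capPos M (r + σ * z))
      = u M * (1 - stdCDF β) := by
    have hcongr : ∀ z ∈ Set.Ici β, stdPDF z * u (capPos M (r + σ * z)) = stdPDF z * u M := by
      intro z hz
      have hz' : (M - r) / σ ≤ z := hz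
      have h1 : M ≤ r + σ * z := by
        have := (div_le_iff₀ hσ).mp hz'
        nlinarith
      rw [capPos_of_ge hM.le h1]
    rw [MeasureTheory.setIntegral_congr_fun measurableSet_Ici hcongr,
      MeasureTheory.integral_mul_const, MeasureTheory.integral_Ici_eq_integral_Ioi]
    have := stdCDF_add_Ioi β
    have heq : ∫ z in Set.Ioi β, stdPDF z = 1 - stdCDF β := by linarith
    rw [heq]; ring
  have hIoo : ∫ z in Set.Ioo α β, stdPDF z * u (capPos M (r + σ * z))
      = ∫ z in Set.Ioo α β, u (r + σ * z) * stdPDF z := by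
    apply MeasureTheory.setIntegral_congr_fun measurableSet_Ioo
    intro z hz
    dsimp only
    have h0 : 0 ≤ r + σ * z := by
      have := (div_le_iff₀ hσ).mp hz.1.le
      nlinarith
    have h1 : r + σ * z ≤ M := by
      have := (le_div_iff₀ hσ).mp hz.2.le
      nlinarith
    rw [capPos_of_mem h0 h1]
    ring
  rw [hsplit1, hsplit2, hIic, hIci, hIoo]
  ring


instance : IsProbabilityMeasure stdGaussian :=
  inferInstanceAs (IsProbabilityMeasure (gaussianReal 0 1))

lemma integ_cap (σ M r : ℝ) (hM : 0 ≤ M) (u : ℝ → ℝ) (hu : Measurable u) (C : ℝ)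
    (hC : ∀ y ∈ Set.Icc (0:ℝ) M, |u y| ≤ C) :
    Integrable (fun z => u (capPos M (r + σ * z))) stdGaussian := by
  have hcontz : Continuous fun z : ℝ => capPos M (r + σ * z) := by
    unfold capPos
    exact continuous_const.min ((continuous_const.add (continuous_const.mul continuous_id)).max continuous_const)
  apply Integrable.mono' (integrable_const C) (hu.comp hcontz.measurable).aestronglyMeasurable
  filter_upwards with z
  rw [Real.norm_eq_abs]
  exact hC _ (capPos_mem_Icc hM)

lemma qDen_zero (σ M r : ℝ) : qDen σ M r 0 = stdCDF (-r / σ) := by simp [qDen]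

lemma qDen_M (σ M r : ℝ) (hM : M ≠ 0) : qDen σ M r M = 1 - stdCDF ((M - r) / σ) := by
  simp [qDen, hM]

lemma qDen_mid (σ M r y : ℝ) (h0 : y ≠ 0) (hM : y ≠ M) :
    qDen σ M r y = σ⁻¹ * stdPDF ((y - r) / σ) := by
  simp [qDen, h0, hM]

lemma qDen_pos (σ M r : ℝ) (hσ : 0 < σ) (y : ℝ) : 0 < qDen σ M r y := by
  unfold qDen
  split_ifs
  · exact stdCDF_pos _
  · have := stdCDF_lt_one ((M - r) / σ); linarith
  · exact mul_pos (inv_pos.mpr hσ) (stdPDF_pos _)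

lemma meas_qDen (σ M r : ℝ) : Measurable (fun y => qDen σ M r y) := by
  unfold qDen
  apply Measurable.ite
  · exact measurableSet_eq
  · exact measurable_const
  apply Measurable.ite
  · exact measurableSet_eq
  · exact measurable_const
  · exact (stdPDF_cont.measurable.comp ((measurable_id.sub measurable_const).div_const σ)).const_mul _

lemma meas_lossM (σ M r : ℝ) : Measurable (fun y => lossM σ M y r) :=
  (Real.measurable_log.comp (meas_qDen σ M r)).neg

lemma log_stdPDF (u : ℝ) : Real.log (stdPDF u) = -(u^2)/2 - Real.log (Real.sqrt (2 * Real.pi)) := by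
  rw [stdPDF, Real.log_div (Real.exp_ne_zero _) (by positivity), Real.log_exp]

lemma lossM_mid (σ M r y : ℝ) (hσ : 0 < σ) (h0 : y ≠ 0) (hM : y ≠ M) :
    lossM σ M y r = Real.log σ + ((y - r)/σ)^2/2 + Real.log (Real.sqrt (2 * Real.pi)) := by
  rw [lossM, qDen_mid σ M r y h0 hM,
    Real.log_mul (by positivity) (stdPDF_pos _).ne', Real.log_inv, log_stdPDF]
  ring

lemma lossM_abs_bound (σ M r : ℝ) (hσ : 0 < σ) (hM : 0 < M) :
    ∀ y ∈ Set.Icc (0:ℝ) M, |lossM σ M y r| ≤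
      |Real.log (stdCDF (-r / σ))| + |Real.log (1 - stdCDF ((M - r) / σ))| +
        (|Real.log σ| + ((M + |r|)/σ)^2/2 + |Real.log (Real.sqrt (2 * Real.pi))|) := by
  intro y hy
  have hq1 : (0:ℝ) ≤ |Real.log (stdCDF (-r / σ))| := abs_nonneg _
  have hq2 : (0:ℝ) ≤ |Real.log (1 - stdCDF ((M - r) / σ))| := abs_nonneg _
  have hq3 : (0:ℝ) ≤ |Real.log σ| + ((M + |r|)/σ)^2/2 + |Real.log (Real.sqrt (2 * Real.pi))| := by
    positivity
  by_cases h0 : y = 0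
  · subst h0
    rw [lossM, qDen_zero, abs_neg]
    linarith
  by_cases hMy : y = M
  · subst hMy
    rw [lossM, qDen_M _ _ _ hM.ne', abs_neg]
    linarith
  · rw [lossM_mid σ M r y hσ h0 hMy]
    have hu : ((y - r)/σ)^2/2 ≤ ((M + |r|)/σ)^2/2 := by
      have h1 : |y - r| ≤ M + |r| := by
        have := abs_sub_abs_le_abs_sub y r
        have hy0 : |y| ≤ M := by
          rw [abs_of_nonneg hy.1]; exact hy.2
        calc |y - r| ≤ |y| + |r| := abs_sub y r
          _ ≤ M + |r| := by linarith
      have h2 : ((y-r)/σ)^2 ≤ ((M + |r|)/σ)^2 := by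
        rw [div_pow, div_pow]
        apply div_le_div_of_nonneg_right ?_ (by positivity) |>.trans_eq rfl
        calc (y-r)^2 = |y-r|^2 := (sq_abs _).symm
          _ ≤ (M + |r|)^2 := by nlinarith [abs_nonneg (y-r), abs_nonneg r]
      linarith
    calc |Real.log σ + ((y - r)/σ)^2/2 + Real.log (Real.sqrt (2 * Real.pi))|
        ≤ |Real.log σ| + ((y - r)/σ)^2/2 + |Real.log (Real.sqrt (2 * Real.pi))| := by
          have := abs_add_le (Real.log σ + ((y - r)/σ)^2/2) (Real.log (Real.sqrt (2 * Real.pi)))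
          have h2 := abs_add_le (Real.log σ) (((y - r)/σ)^2/2)
          have h3 : |((y - r)/σ)^2/2| = ((y - r)/σ)^2/2 := abs_of_nonneg (by positivity)
          linarith
      _ ≤ |Real.log σ| + ((M + |r|)/σ)^2/2 + |Real.log (Real.sqrt (2 * Real.pi))| := by linarith
      _ ≤ |Real.log (stdCDF (-r / σ))| + |Real.log (1 - stdCDF ((M - r) / σ))| +
        (|Real.log σ| + ((M + |r|)/σ)^2/2 + |Real.log (Real.sqrt (2 * Real.pi))|) := by linarith


lemma integral_Ioo_eq_intervalIntegral {a b : ℝ} (hab : a ≤ b) (f : ℝ → ℝ) :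
    ∫ x in Set.Ioo a b, f x = ∫ x in a..b, f x := by
  rw [intervalIntegral.integral_of_le hab, MeasureTheory.integral_Ioc_eq_integral_Ioo]

lemma exp_bound_on_Icc (lam M : ℝ) (hM : 0 ≤ M) :
    ∀ y ∈ Set.Icc (0:ℝ) M, |Real.exp (lam * y)| ≤ Real.exp (|lam| * M) := by
  intro y hy
  rw [abs_of_pos (Real.exp_pos _)]
  apply Real.exp_le_exp.mpr
  calc lam * y ≤ |lam * y| := le_abs_self _
    _ = |lam| * |y| := abs_mul _ _
    _ ≤ |lam| * M := by
        apply mul_le_mul_of_nonneg_left ?_ (abs_nonneg lam)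
        rw [abs_of_nonneg hy.1]; exact hy.2

lemma Zf_eq (σ M r lam : ℝ) (hσ : 0 < σ) (hM : 0 < M) :
    ∫ z, Real.exp (lam * capPos M (r + σ * z)) ∂stdGaussian
      = stdCDF (-r / σ) + Real.exp (lam * M) * (1 - stdCDF ((M - r) / σ))
        + ∫ z in Set.Ioo (-r / σ) ((M - r) / σ), Real.exp (lam * (r + σ * z)) * stdPDF z := by
  have h := split_integral σ M r hσ hM (fun y => Real.exp (lam * y))
    (Real.measurable_exp.comp (measurable_const.mul measurable_id))
    (Real.exp (|lam| * M)) (exp_bound_on_Icc lam M hM.le)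
  simpa using h

lemma Zf_pos (σ M r lam : ℝ) (hσ : 0 < σ) (hM : 0 < M) :
    0 < ∫ z, Real.exp (lam * capPos M (r + σ * z)) ∂stdGaussian := by
  rw [Zf_eq σ M r lam hσ hM]
  have h1 : 0 < stdCDF (-r / σ) := stdCDF_pos _
  have h2 : 0 < Real.exp (lam * M) * (1 - stdCDF ((M - r) / σ)) := by
    apply mul_pos (Real.exp_pos _)
    have := stdCDF_lt_one ((M - r) / σ); linarith
  have h3 : 0 ≤ ∫ z in Set.Ioo (-r / σ) ((M - r) / σ), Real.exp (lam * (r + σ * z)) * stdPDF z :=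
    MeasureTheory.setIntegral_nonneg measurableSet_Ioo
      (fun z _ => mul_nonneg (Real.exp_pos _).le (stdPDF_pos _).le)
  linarith

lemma middle_shift (σ M r rstar lam : ℝ) (hσ : 0 < σ) (hM : 0 < M) :
    ∫ z in Set.Ioo (-rstar / σ) ((M - rstar) / σ),
        stdPDF (z + (rstar - r) / σ) * Real.exp (lam * (rstar + σ * z))
      = ∫ w in Set.Ioo (-r / σ) ((M - r) / σ), Real.exp (lam * (r + σ * w)) * stdPDF w := by
  set c := (rstar - r) / σ with hc
  have hαβ : (-rstar / σ) ≤ ((M - rstar) / σ) := by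
    apply div_le_div_of_nonneg_right ?_ hσ.le; linarith
  have hαβ' : (-r / σ) ≤ ((M - r) / σ) := by
    apply div_le_div_of_nonneg_right ?_ hσ.le; linarith
  have key : ∀ z : ℝ, stdPDF (z + c) * Real.exp (lam * (rstar + σ * z))
      = (fun w => Real.exp (lam * (r + σ * w)) * stdPDF w) (z + c) := by
    intro z
    have hσc : σ * c = rstar - r := by rw [hc]; field_simp
    have : r + σ * (z + c) = rstar + σ * z := by
      have : σ * (z + c) = σ * z + (rstar - r) := by rw [mul_add, hσc]
      rw [this]; ring
    simp only [this]; ring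
  rw [integral_Ioo_eq_intervalIntegral hαβ, integral_Ioo_eq_intervalIntegral hαβ']
  have h1 : ∫ z in (-rstar / σ)..((M - rstar) / σ),
      stdPDF (z + c) * Real.exp (lam * (rstar + σ * z))
      = ∫ z in (-rstar / σ)..((M - rstar) / σ),
          (fun w => Real.exp (lam * (r + σ * w)) * stdPDF w) (z + c) := by
    apply intervalIntegral.integral_congr
    intro z _; exact key z
  have h2 := intervalIntegral.integral_comp_add_right (a := -rstar / σ) (b := (M - rstar) / σ)
    (fun w => Real.exp (lam * (r + σ * w)) * stdPDF w) c
  rw [h1, h2]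
  have e1 : -rstar / σ + c = -r / σ := by rw [hc]; field_simp; ring
  have e2 : (M - rstar) / σ + c = (M - r) / σ := by rw [hc]; field_simp; ring
  rw [e1, e2]

lemma uH_bound (σ M r rstar lam : ℝ) (hσ : 0 < σ) (hM : 0 < M) :
    ∀ y ∈ Set.Icc (0:ℝ) M, |qDen σ M r y / qDen σ M rstar y * Real.exp (lam * y)| ≤
      (stdCDF (-r/σ) / stdCDF (-rstar/σ)
        + (1 - stdCDF ((M-r)/σ)) / (1 - stdCDF ((M-rstar)/σ))
        + Real.exp (((M + |rstar|)/σ)^2/2)) * Real.exp (|lam| * M) := by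
  intro y hy
  have hratio : qDen σ M r y / qDen σ M rstar y ≤
      stdCDF (-r/σ) / stdCDF (-rstar/σ)
      + (1 - stdCDF ((M-r)/σ)) / (1 - stdCDF ((M-rstar)/σ))
      + Real.exp (((M + |rstar|)/σ)^2/2) := by
    have hb1 : 0 ≤ stdCDF (-r/σ) / stdCDF (-rstar/σ) :=
      div_nonneg (stdCDF_pos _).le (stdCDF_pos _).le
    have hb2 : 0 ≤ (1 - stdCDF ((M-r)/σ)) / (1 - stdCDF ((M-rstar)/σ)) := by
      have := stdCDF_lt_one ((M-r)/σ)
      have := stdCDF_lt_one ((M-rstar)/σ)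
      apply div_nonneg <;> linarith
    have hb3 : (0:ℝ) ≤ Real.exp (((M + |rstar|)/σ)^2/2) := (Real.exp_pos _).le
    by_cases h0 : y = 0
    · subst h0; rw [qDen_zero, qDen_zero]; linarith
    by_cases hMy : y = M
    · subst hMy; rw [qDen_M _ _ _ hM.ne', qDen_M _ _ _ hM.ne']; linarith
    · rw [qDen_mid _ _ _ _ h0 hMy, qDen_mid _ _ _ _ h0 hMy]
      have hmid : σ⁻¹ * stdPDF ((y - r) / σ) / (σ⁻¹ * stdPDF ((y - rstar) / σ))
          = stdPDF ((y - r) / σ) / stdPDF ((y - rstar) / σ) := by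
        rw [mul_div_mul_left _ _ (by positivity : σ⁻¹ ≠ 0)]
      rw [hmid]
      have hexp : stdPDF ((y - r) / σ) / stdPDF ((y - rstar) / σ)
          = Real.exp ((((y - rstar)/σ)^2 - ((y - r)/σ)^2)/2) := by
        rw [stdPDF, stdPDF, div_div_div_comm, div_self (by positivity : Real.sqrt (2 * Real.pi) ≠ 0),
          div_one, ← Real.exp_sub]
        congr 1; ring
      rw [hexp]
      have harg : (((y - rstar)/σ)^2 - ((y - r)/σ)^2)/2 ≤ ((M + |rstar|)/σ)^2/2 := by
        have h1 : |y - rstar| ≤ M + |rstar| := by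
          have hy0 : |y| ≤ M := by rw [abs_of_nonneg hy.1]; exact hy.2
          calc |y - rstar| ≤ |y| + |rstar| := abs_sub y rstar
            _ ≤ M + |rstar| := by linarith
        have h2 : ((y - rstar)/σ)^2 ≤ ((M + |rstar|)/σ)^2 := by
          rw [div_pow, div_pow]
          apply div_le_div_of_nonneg_right ?_ (by positivity) |>.trans_eq rfl
          calc (y - rstar)^2 = |y - rstar|^2 := (sq_abs _).symm
            _ ≤ (M + |rstar|)^2 := by nlinarith [abs_nonneg (y - rstar), abs_nonneg rstar]
        nlinarith [sq_nonneg ((y - r)/σ)]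
      have := Real.exp_le_exp.mpr harg
      linarith
  have hrpos : 0 ≤ qDen σ M r y / qDen σ M rstar y :=
    div_nonneg (qDen_pos σ M r hσ y).le (qDen_pos σ M rstar hσ y).le
  rw [abs_mul]
  rw [abs_of_nonneg hrpos]
  apply mul_le_mul hratio (exp_bound_on_Icc lam M hM.le y hy) (abs_nonneg _) ?_
  · have := Real.exp_pos (((M + |rstar|)/σ)^2/2)
    have hb1 : 0 ≤ stdCDF (-r/σ) / stdCDF (-rstar/σ) :=
      div_nonneg (stdCDF_pos _).le (stdCDF_pos _).le
    have hb2 : 0 ≤ (1 - stdCDF ((M-r)/σ)) / (1 - stdCDF ((M-rstar)/σ)) := by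
      have := stdCDF_lt_one ((M-r)/σ)
      have := stdCDF_lt_one ((M-rstar)/σ)
      apply div_nonneg <;> linarith
    linarith
lemma change_of_measure (σ M r rstar lam : ℝ) (hσ : 0 < σ) (hM : 0 < M) :
    ∫ z, (qDen σ M r (capPos M (rstar + σ * z)) / qDen σ M rstar (capPos M (rstar + σ * z)))
        * Real.exp (lam * capPos M (rstar + σ * z)) ∂stdGaussian
      = ∫ z, Real.exp (lam * capPos M (r + σ * z)) ∂stdGaussian := by
  set u : ℝ → ℝ := fun y => qDen σ M r y / qDen σ M rstar y * Real.exp (lam * y) with hu_def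
  have hu : Measurable u :=
    ((meas_qDen σ M r).div (meas_qDen σ M rstar)).mul
      (Real.measurable_exp.comp (measurable_const.mul measurable_id))
  have hbound : ∀ y ∈ Set.Icc (0:ℝ) M, |u y| ≤ _ := uH_bound σ M r rstar lam hσ hM
  have hL := split_integral σ M rstar hσ hM u hu _ hbound
  have hR := Zf_eq σ M r lam hσ hM
  rw [hL, hR]
  have e0 : u 0 = stdCDF (-r/σ) / stdCDF (-rstar/σ) := by
    rw [hu_def]; simp [qDen_zero]
  have eM : u M = (1 - stdCDF ((M-r)/σ)) / (1 - stdCDF ((M-rstar)/σ)) * Real.exp (lam * M) := by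
    rw [hu_def]; simp [qDen_M _ _ _ hM.ne']
  have hmid : ∫ z in Set.Ioo (-rstar / σ) ((M - rstar) / σ), u (rstar + σ * z) * stdPDF z
      = ∫ z in Set.Ioo (-r / σ) ((M - r) / σ), Real.exp (lam * (r + σ * z)) * stdPDF z := by
    rw [← middle_shift σ M r rstar lam hσ hM]
    apply MeasureTheory.setIntegral_congr_fun measurableSet_Ioo
    intro z hz
    dsimp only
    have h0 : 0 < rstar + σ * z := by
      have := (div_lt_iff₀ hσ).mp hz.1
      nlinarith
    have h1 : rstar + σ * z < M := by
      have := (lt_div_iff₀ hσ).mp hz.2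
      nlinarith
    rw [hu_def]
    simp only
    rw [qDen_mid _ _ _ _ (ne_of_gt h0) (ne_of_lt h1), qDen_mid _ _ _ _ (ne_of_gt h0) (ne_of_lt h1)]
    have hmid2 : σ⁻¹ * stdPDF ((rstar + σ * z - r) / σ) / (σ⁻¹ * stdPDF ((rstar + σ * z - rstar) / σ))
        = stdPDF ((rstar + σ * z - r) / σ) / stdPDF ((rstar + σ * z - rstar) / σ) := by
      rw [mul_div_mul_left _ _ (by positivity : σ⁻¹ ≠ 0)]
    rw [hmid2]
    have e1 : (rstar + σ * z - rstar) / σ = z := by field_simp; ring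
    have e2 : (rstar + σ * z - r) / σ = z + (rstar - r) / σ := by field_simp; ring
    rw [e1, e2]
    have hne := (stdPDF_pos z).ne'
    field_simp
    try ring
  rw [e0, eM, hmid]
  have ha : stdCDF (-r/σ) / stdCDF (-rstar/σ) * stdCDF (-rstar/σ) = stdCDF (-r/σ) :=
    div_mul_cancel₀ _ (stdCDF_pos _).ne'
  have hb : (1 - stdCDF ((M-r)/σ)) / (1 - stdCDF ((M-rstar)/σ)) * Real.exp (lam * M)
      * (1 - stdCDF ((M-rstar)/σ))
      = Real.exp (lam * M) * (1 - stdCDF ((M-r)/σ)) := by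
    have hne : (1 - stdCDF ((M-rstar)/σ)) ≠ 0 := by
      have := stdCDF_lt_one ((M-rstar)/σ); intro h; linarith
    field_simp
  rw [ha, hb]


lemma integ_loss (σ M r rstar : ℝ) (hσ : 0 < σ) (hM : 0 < M) :
    Integrable (fun z => lossM σ M (capPos M (rstar + σ * z)) r) stdGaussian :=
  integ_cap σ M rstar hM.le (fun y => lossM σ M y r) (meas_lossM σ M r) _
    (lossM_abs_bound σ M r hσ hM)

lemma integ_id_cap (σ M rstar : ℝ) (hM : 0 < M) :
    Integrable (fun z => capPos M (rstar + σ * z)) stdGaussian :=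
  integ_cap σ M rstar hM.le (fun y => y) measurable_id M
    (fun y hy => by rw [abs_of_nonneg hy.1]; exact hy.2)

lemma integ_h (σ M r rstar lam C : ℝ) (hσ : 0 < σ) (hM : 0 < M)
    (hC : ∀ y ∈ Set.Icc (0:ℝ) M,
      |qDen σ M r y / qDen σ M rstar y * Real.exp (lam * y)| ≤ C) :
    Integrable (fun z =>
      qDen σ M r (capPos M (rstar + σ * z)) / qDen σ M rstar (capPos M (rstar + σ * z))
        * Real.exp (lam * capPos M (rstar + σ * z))) stdGaussian :=
  integ_cap σ M rstar hM.le _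
    (((meas_qDen σ M r).div (meas_qDen σ M rstar)).mul
      (Real.measurable_exp.comp (measurable_const.mul measurable_id))) C hC

/-- Donsker–Varadhan one-sided bound for the capped Gaussian family. -/
lemma dv_bound (σ M r rstar lam : ℝ) (hσ : 0 < σ) (hM : 0 < M) :
    lam * (∫ z, capPos M (rstar + σ * z) ∂stdGaussian)
      - Real.log (∫ z, Real.exp (lam * capPos M (r + σ * z)) ∂stdGaussian)
      ≤ popLoss σ M r rstar - popLoss σ M rstar rstar := by
  set Z := ∫ z, Real.exp (lam * capPos M (r + σ * z)) ∂stdGaussian with hZdef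
  have hZpos : 0 < Z := Zf_pos σ M r lam hσ hM
  set Y : ℝ → ℝ := fun z => capPos M (rstar + σ * z) with hYdef
  -- the h function
  set H : ℝ → ℝ := fun z =>
    qDen σ M r (Y z) / qDen σ M rstar (Y z) * Real.exp (lam * Y z) / Z with hHdef
  have hHpos : ∀ z, 0 < H z := by
    intro z
    apply div_pos (mul_pos (div_pos (qDen_pos σ M r hσ _) (qDen_pos σ M rstar hσ _))
      (Real.exp_pos _)) hZpos
  -- pointwise inequality
  have hpt : ∀ z, 1 - H z ≤ lossM σ M (Y z) r - lossM σ M (Y z) rstar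
      - lam * Y z + Real.log Z := by
    intro z
    have hlog : Real.log (H z) ≤ H z - 1 := Real.log_le_sub_one_of_pos (hHpos z)
    have hq1 := qDen_pos σ M r hσ (Y z)
    have hq2 := qDen_pos σ M rstar hσ (Y z)
    have hexpand : Real.log (H z)
        = Real.log (qDen σ M r (Y z)) - Real.log (qDen σ M rstar (Y z))
          + lam * Y z - Real.log Z := by
      rw [hHdef]
      simp only
      rw [Real.log_div (by positivity) hZpos.ne',
        Real.log_mul (by positivity) (Real.exp_pos _).ne',
        Real.log_div hq1.ne' hq2.ne', Real.log_exp]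
    rw [lossM, lossM]
    have := hlog
    rw [hexpand] at this
    linarith
  -- integrability
  have hint1 : Integrable (fun z => lossM σ M (Y z) r) stdGaussian :=
    integ_loss σ M r rstar hσ hM
  have hint2 : Integrable (fun z => lossM σ M (Y z) rstar) stdGaussian :=
    integ_loss σ M rstar rstar hσ hM
  have hintY : Integrable Y stdGaussian := integ_id_cap σ M rstar hM
  have hintW : Integrable (fun z => lossM σ M (Y z) r - lossM σ M (Y z) rstar
      - lam * Y z + Real.log Z) stdGaussian :=
    (((hint1.sub hint2).sub (hintY.const_mul lam)).add (integrable_const _))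
  have hintH : Integrable H stdGaussian := by
    have := (integ_h σ M r rstar lam _ hσ hM (uH_bound σ M r rstar lam hσ hM)).div_const Z
    exact this
  have hHint : ∫ z, H z ∂stdGaussian = 1 := by
    have : ∫ z, H z ∂stdGaussian = (∫ z, qDen σ M r (Y z) / qDen σ M rstar (Y z)
        * Real.exp (lam * Y z) ∂stdGaussian) / Z := MeasureTheory.integral_div Z _
    rw [this, hYdef]
    simp only
    rw [change_of_measure σ M r rstar lam hσ hM, ← hZdef, div_self hZpos.ne']
  have hmono := MeasureTheory.integral_mono ((integrable_const (1:ℝ)).sub hintH) hintW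
    (fun z => hpt z)
  simp only [Pi.sub_apply] at hmono
  rw [MeasureTheory.integral_sub (integrable_const _) hintH, hHint,
    MeasureTheory.integral_const] at hmono
  have hint12 : Integrable (fun z => lossM σ M (Y z) r - lossM σ M (Y z) rstar) stdGaussian :=
    hint1.sub hint2
  have hint123 : Integrable (fun z => lossM σ M (Y z) r - lossM σ M (Y z) rstar - lam * Y z)
      stdGaussian := hint12.sub (hintY.const_mul lam)
  have e1 : ∫ z, (lossM σ M (Y z) r - lossM σ M (Y z) rstar - lam * Y z + Real.log Z)
      ∂stdGaussian
      = popLoss σ M r rstar - popLoss σ M rstar rstar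
        - lam * ∫ z, Y z ∂stdGaussian + Real.log Z := by
    rw [MeasureTheory.integral_add hint123 (integrable_const _),
      MeasureTheory.integral_sub hint12 (hintY.const_mul lam),
      MeasureTheory.integral_sub hint1 hint2,
      MeasureTheory.integral_const_mul, MeasureTheory.integral_const]
    have hP1 : ∫ z, lossM σ M (Y z) r ∂stdGaussian = popLoss σ M r rstar := rfl
    have hP2 : ∫ z, lossM σ M (Y z) rstar ∂stdGaussian = popLoss σ M rstar rstar := rfl
    rw [hP1, hP2]
    simp [measure_univ]
  rw [e1] at hmono
  simp only [measure_univ, probReal_univ, ENNReal.toReal_one, smul_eq_mul, one_mul] at hmono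
  have : ∫ z, Y z ∂stdGaussian = ∫ z, capPos M (rstar + σ * z) ∂stdGaussian := rfl
  rw [this] at hmono
  linarith


lemma hoeffding_aux (p : ℝ) (hp : p ∈ Set.Icc (0:ℝ) 1) :
    ∀ t : ℝ, 0 ≤ t → Real.log (1 - p + p * Real.exp t) ≤ p * t + t^2/8 := by
  have hD : ∀ t : ℝ, 0 < 1 - p + p * Real.exp t := by
    intro t
    rcases eq_or_lt_of_le hp.1 with h | h
    · rw [← h]; norm_num
    · have : 0 < p * Real.exp t := mul_pos h (Real.exp_pos t)
      have := hp.2; linarith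
  set g1 : ℝ → ℝ := fun t => p + t/4 - p * Real.exp t / (1 - p + p * Real.exp t) with hg1
  have hg1deriv : ∀ t : ℝ, HasDerivAt g1
      (1/4 - p * Real.exp t * (1 - p) / (1 - p + p * Real.exp t)^2) t := by
    intro t
    have hinner : HasDerivAt (fun t => 1 - p + p * Real.exp t) (p * Real.exp t) t :=
      ((Real.hasDerivAt_exp t).const_mul p).const_add (1 - p)
    have hnum : HasDerivAt (fun t => p * Real.exp t) (p * Real.exp t) t :=
      (Real.hasDerivAt_exp t).const_mul p
    have hq := hnum.div hinner (hD t).ne'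
    have hlin : HasDerivAt (fun t : ℝ => p + t/4) (1/4) t := by
      simpa using ((hasDerivAt_id t).div_const 4).const_add p
    have := hlin.sub hq
    refine this.congr_deriv ?_
    field_simp
    ring
  have hg1mono : Monotone g1 := by
    apply monotone_of_deriv_nonneg
    · intro t; exact (hg1deriv t).differentiableAt
    · intro t
      rw [(hg1deriv t).deriv]
      have h1 : 4 * (p * Real.exp t * (1 - p)) ≤ (1 - p + p * Real.exp t)^2 := by
        nlinarith [sq_nonneg (1 - p - p * Real.exp t), mul_nonneg hp.1 (Real.exp_pos t).le,
          sub_nonneg.mpr hp.2]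
      have h2 : p * Real.exp t * (1 - p) / (1 - p + p * Real.exp t)^2 ≤ 1/4 := by
        rw [div_le_iff₀ (pow_pos (hD t) 2)]
        linarith
      linarith
  have hg10 : g1 0 = 0 := by
    rw [hg1]; simp
  have hg1nonneg : ∀ t : ℝ, 0 ≤ t → 0 ≤ g1 t := by
    intro t ht
    rw [← hg10]; exact hg1mono ht
  set f : ℝ → ℝ := fun t => p * t + t^2/8 - Real.log (1 - p + p * Real.exp t) with hf
  have hfderiv : ∀ t : ℝ, HasDerivAt f (g1 t) t := by
    intro t
    have hinner : HasDerivAt (fun t => 1 - p + p * Real.exp t) (p * Real.exp t) t :=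
      ((Real.hasDerivAt_exp t).const_mul p).const_add (1 - p)
    have hlog := hinner.log (hD t).ne'
    have hpoly : HasDerivAt (fun t : ℝ => p * t + t^2/8) (p + t/4) t := by
      have h1 : HasDerivAt (fun t : ℝ => p * t) p t := by
        simpa using (hasDerivAt_id t).const_mul p
      have h2 : HasDerivAt (fun t : ℝ => t^2/8) (t/4) t := by
        have := (hasDerivAt_pow 2 t).div_const 8
        exact this.congr_deriv (by ring)
      exact h1.add h2
    have := hpoly.sub hlog
    exact this
  have hf0 : f 0 = 0 := by rw [hf]; simp
  have hfmono : MonotoneOn f (Set.Ici 0) := by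
    apply monotoneOn_of_deriv_nonneg (convex_Ici 0)
    · exact (continuous_iff_continuousAt.mpr
        (fun t => (hfderiv t).differentiableAt.continuousAt)).continuousOn
    · intro t _
      exact (hfderiv t).differentiableAt.differentiableWithinAt
    · intro t ht
      rw [(hfderiv t).deriv]
      exact hg1nonneg t (le_of_lt (by simpa using ht))
  intro t ht
  have := hfmono (Set.self_mem_Ici) (Set.mem_Ici.mpr ht) ht
  rw [hf0] at this
  rw [hf] at this
  simp only at this
  linarith

lemma hoeffding_scalar (p : ℝ) (hp : p ∈ Set.Icc (0:ℝ) 1) (t : ℝ) :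
    Real.log (1 - p + p * Real.exp t) ≤ p * t + t^2/8 := by
  rcases le_or_gt 0 t with ht | ht
  · exact hoeffding_aux p hp t ht
  · have hp' : 1 - p ∈ Set.Icc (0:ℝ) 1 := by
      constructor <;> [linarith [hp.2]; linarith [hp.1]]
    have h := hoeffding_aux (1 - p) hp' (-t) (by linarith)
    have hD : 0 < p + (1 - p) * Real.exp (-t) := by
      rcases eq_or_lt_of_le hp.1 with h1 | h1
      · rw [← h1]; simp [Real.exp_pos]
      · have := hp.2
        rcases eq_or_lt_of_le this with h2 | h2
        · rw [h2]; simpa using h1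
        · have : 0 < (1 - p) * Real.exp (-t) := mul_pos (by linarith) (Real.exp_pos _)
          linarith
    have key : Real.log (1 - p + p * Real.exp t)
        = t + Real.log (1 - (1 - p) + (1 - p) * Real.exp (-t)) := by
      have e1 : 1 - (1 - p) + (1 - p) * Real.exp (-t)
          = Real.exp (-t) * (1 - p + p * Real.exp t) := by
        have := Real.exp_neg t
        have h3 : Real.exp (-t) * Real.exp t = 1 := by
          rw [← Real.exp_add]; simp
        linear_combination (-p) * h3
      rw [e1, Real.log_mul (Real.exp_pos _).ne' ?_, Real.log_exp]
      · ring
      · have hDt : 0 < 1 - p + p * Real.exp t := by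
          rcases eq_or_lt_of_le hp.1 with h1 | h1
          · rw [← h1]; norm_num
          · have : 0 < p * Real.exp t := mul_pos h1 (Real.exp_pos t)
            have := hp.2; linarith
        exact hDt.ne'
    rw [key]
    have : (1:ℝ) - p = 1 - p := rfl
    calc t + Real.log (1 - (1 - p) + (1 - p) * Real.exp (-t))
        ≤ t + ((1 - p) * (-t) + (-t)^2/8) := by linarith
      _ = p * t + t^2/8 := by ring


lemma cappedMean_mem (σ M r : ℝ) (hM : 0 < M) :
    (∫ z, capPos M (r + σ * z) ∂stdGaussian) ∈ Set.Icc (0:ℝ) M := by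
  constructor
  · apply MeasureTheory.integral_nonneg
    intro z
    exact (capPos_mem_Icc hM.le).1
  · have h := MeasureTheory.integral_mono (integ_id_cap σ M r hM) (integrable_const M)
      (fun z => (capPos_mem_Icc (u := r + σ * z) hM.le).2)
    simpa [measure_univ] using h

lemma log_Zf_le (σ M r lam : ℝ) (hσ : 0 < σ) (hM : 0 < M) :
    Real.log (∫ z, Real.exp (lam * capPos M (r + σ * z)) ∂stdGaussian)
      ≤ lam * (∫ z, capPos M (r + σ * z) ∂stdGaussian) + lam^2 * M^2 / 8 := by
  set μr := ∫ z, capPos M (r + σ * z) ∂stdGaussian with hμr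
  have hμ := cappedMean_mem σ M r hM
  rw [← hμr] at hμ
  set p := μr / M with hp_def
  have hp : p ∈ Set.Icc (0:ℝ) 1 := by
    constructor
    · exact div_nonneg hμ.1 hM.le
    · rw [div_le_one hM]; exact hμ.2
  -- pointwise convexity bound
  have hpt : ∀ z, Real.exp (lam * capPos M (r + σ * z))
      ≤ 1 - capPos M (r + σ * z) / M + capPos M (r + σ * z) / M * Real.exp (lam * M) := by
    intro z
    set y := capPos M (r + σ * z) with hy
    have hy2 := capPos_mem_Icc (M := M) (u := r + σ * z) hM.le
    rw [← hy] at hy2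
    have ht : y / M ∈ Set.Icc (0:ℝ) 1 := by
      constructor
      · exact div_nonneg hy2.1 hM.le
      · rw [div_le_one hM]; exact hy2.2
    have hcx := convexOn_exp.2 (Set.mem_univ (0:ℝ)) (Set.mem_univ (lam * M))
      (by linarith [ht.2] : (0:ℝ) ≤ 1 - y / M) ht.1 (by ring)
    have harg : (1 - y / M) • (0:ℝ) + (y / M) • (lam * M) = lam * y := by
      simp only [smul_eq_mul]
      field_simp
      ring
    rw [harg] at hcx
    simp only [smul_eq_mul, Real.exp_zero, mul_one] at hcx
    calc Real.exp (lam * y) ≤ (1 - y / M) * 1 + y / M * Real.exp (lam * M) := by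
          simpa using hcx
      _ = 1 - y / M + y / M * Real.exp (lam * M) := by ring
  have hintL : Integrable (fun z => Real.exp (lam * capPos M (r + σ * z))) stdGaussian :=
    integ_cap σ M r hM.le (fun y => Real.exp (lam * y))
      (Real.measurable_exp.comp (measurable_const.mul measurable_id))
      (Real.exp (|lam| * M)) (exp_bound_on_Icc lam M hM.le)
  have hintY := integ_id_cap σ M r hM
  have hintR : Integrable (fun z => 1 - capPos M (r + σ * z) / M
      + capPos M (r + σ * z) / M * Real.exp (lam * M)) stdGaussian := by
    apply Integrable.add
    · exact (integrable_const 1).sub (hintY.div_const M)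
    · exact (hintY.div_const M).mul_const _
  have hZle : (∫ z, Real.exp (lam * capPos M (r + σ * z)) ∂stdGaussian)
      ≤ 1 - p + p * Real.exp (lam * M) := by
    have h := MeasureTheory.integral_mono hintL hintR hpt
    have e1 : ∫ z, (1 - capPos M (r + σ * z) / M
        + capPos M (r + σ * z) / M * Real.exp (lam * M)) ∂stdGaussian
        = 1 - p + p * Real.exp (lam * M) := by
      have hi1 : Integrable (fun z => 1 - capPos M (r + σ * z) / M) stdGaussian :=
        (integrable_const 1).sub (hintY.div_const M)
      have hi2 : Integrable (fun z => capPos M (r + σ * z) / M * Real.exp (lam * M))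
          stdGaussian := (hintY.div_const M).mul_const _
      have hi3 : Integrable (fun z => capPos M (r + σ * z) / M) stdGaussian :=
        hintY.div_const M
      rw [MeasureTheory.integral_add hi1 hi2,
        MeasureTheory.integral_sub (integrable_const 1) hi3,
        MeasureTheory.integral_mul_const, MeasureTheory.integral_div,
        MeasureTheory.integral_const]
      simp [measure_univ, hp_def, hμr]
    rw [e1] at h
    exact h
  have hZpos := Zf_pos σ M r lam hσ hM
  calc Real.log (∫ z, Real.exp (lam * capPos M (r + σ * z)) ∂stdGaussian)
      ≤ Real.log (1 - p + p * Real.exp (lam * M)) := Real.log_le_log hZpos hZle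
    _ ≤ p * (lam * M) + (lam * M)^2/8 := hoeffding_scalar p hp (lam * M)
    _ = lam * μr + lam^2 * M^2 / 8 := by
        rw [hp_def]
        field_simp


/-- Explicit formula for the capped mean. -/
def muExpl (σ M r : ℝ) : ℝ :=
  M * (1 - stdCDF ((M - r)/σ)) + r * (stdCDF ((M - r)/σ) - stdCDF (-r/σ))
    + σ * (stdPDF (-r/σ) - stdPDF ((M - r)/σ))

lemma cappedMean_eq (σ M r : ℝ) (hσ : 0 < σ) (hM : 0 < M) :
    ∫ z, capPos M (r + σ * z) ∂stdGaussian = muExpl σ M r := by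
  have h := split_integral σ M r hσ hM (fun y => y) measurable_id M
    (fun y hy => by rw [abs_of_nonneg hy.1]; exact hy.2)
  have hαβ : (-r/σ) ≤ ((M - r)/σ) := by
    apply div_le_div_of_nonneg_right ?_ hσ.le; linarith
  have hi1 : IntegrableOn (fun z => r * stdPDF z) (Set.Ioo (-r/σ) ((M-r)/σ)) volume :=
    (intOn_stdPDF _).const_mul r
  have hi2 : IntegrableOn (fun z => σ * (z * stdPDF z)) (Set.Ioo (-r/σ) ((M-r)/σ)) volume := by
    apply IntegrableOn.mono_set ?_ Set.Ioo_subset_Icc_self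
    exact ((continuous_const.mul (continuous_id.mul stdPDF_cont)).integrableOn_Icc)
  have hmid : ∫ z in Set.Ioo (-r/σ) ((M-r)/σ), (r + σ * z) * stdPDF z
      = r * (stdCDF ((M-r)/σ) - stdCDF (-r/σ)) + σ * (stdPDF (-r/σ) - stdPDF ((M-r)/σ)) := by
    have e1 : ∀ z : ℝ, (r + σ * z) * stdPDF z = r * stdPDF z + σ * (z * stdPDF z) := by
      intro z; ring
    rw [MeasureTheory.setIntegral_congr_fun measurableSet_Ioo (fun z _ => e1 z),
      MeasureTheory.integral_add hi1 hi2, MeasureTheory.integral_const_mul,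
      MeasureTheory.integral_const_mul, integral_Ioo_stdPDF hαβ, integral_Ioo_id_stdPDF hαβ]
  rw [h, hmid, muExpl]
  ring

lemma hasDerivAt_muExpl (σ M : ℝ) (hσ : 0 < σ) (r : ℝ) :
    HasDerivAt (fun r => muExpl σ M r) (stdCDF ((M - r)/σ) - stdCDF (-r/σ)) r := by
  have hβ : HasDerivAt (fun r : ℝ => (M - r)/σ) (-(1/σ)) r := by
    have := ((hasDerivAt_id r).const_sub M).div_const σ
    exact this.congr_deriv (by ring)
  have hα : HasDerivAt (fun r : ℝ => -r/σ) (-(1/σ)) r := by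
    have := ((hasDerivAt_id r).neg).div_const σ
    exact this.congr_deriv (by ring)
  have hΦβ : HasDerivAt (fun r : ℝ => stdCDF ((M - r)/σ))
      (stdPDF ((M - r)/σ) * (-(1/σ))) r := by have := (hasDerivAt_stdCDF ((M - r)/σ)).comp r hβ; exact this
  have hΦα : HasDerivAt (fun r : ℝ => stdCDF (-r/σ))
      (stdPDF (-r/σ) * (-(1/σ))) r := by have := (hasDerivAt_stdCDF (-r/σ)).comp r hα; exact this
  have hφβ : HasDerivAt (fun r : ℝ => stdPDF ((M - r)/σ))
      ((-((M - r)/σ) * stdPDF ((M - r)/σ)) * (-(1/σ))) r :=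
    by have := (hasDerivAt_stdPDF ((M - r)/σ)).comp r hβ; exact this
  have hφα : HasDerivAt (fun r : ℝ => stdPDF (-r/σ))
      ((-(-r/σ) * stdPDF (-r/σ)) * (-(1/σ))) r :=
    by have := (hasDerivAt_stdPDF (-r/σ)).comp r hα; exact this
  have h1 : HasDerivAt (fun r : ℝ => M * (1 - stdCDF ((M - r)/σ)))
      (M * (-(stdPDF ((M - r)/σ) * (-(1/σ))))) r := (hΦβ.const_sub 1).const_mul M
  have h2 : HasDerivAt (fun r : ℝ => r * (stdCDF ((M - r)/σ) - stdCDF (-r/σ)))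
      (1 * (stdCDF ((M - r)/σ) - stdCDF (-r/σ))
        + r * (stdPDF ((M - r)/σ) * (-(1/σ)) - stdPDF (-r/σ) * (-(1/σ)))) r :=
    (hasDerivAt_id r).mul (hΦβ.sub hΦα)
  have h3 : HasDerivAt (fun r : ℝ => σ * (stdPDF (-r/σ) - stdPDF ((M - r)/σ)))
      (σ * ((-(-r/σ) * stdPDF (-r/σ)) * (-(1/σ)) - (-((M - r)/σ) * stdPDF ((M - r)/σ)) * (-(1/σ)))) r :=
    (hφα.sub hφβ).const_mul σ
  have hall := (h1.add h2).add h3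
  have : HasDerivAt (fun r => muExpl σ M r)
      (M * (-(stdPDF ((M - r)/σ) * (-(1/σ))))
        + (1 * (stdCDF ((M - r)/σ) - stdCDF (-r/σ))
          + r * (stdPDF ((M - r)/σ) * (-(1/σ)) - stdPDF (-r/σ) * (-(1/σ))))
        + σ * ((-(-r/σ) * stdPDF (-r/σ)) * (-(1/σ)) - (-((M - r)/σ) * stdPDF ((M - r)/σ)) * (-(1/σ)))) r := by
    apply hall.congr_of_eventuallyEq
    filter_upwards with x
    rw [muExpl]; rfl
  convert this using 1
  field_simp
  ring

lemma deriv_lower (σ M : ℝ) (hσ : 0 < σ) (hM : 0 < M) (t : ℝ) (ht : t ∈ Set.Icc 0 M) :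
    stdCDF (M/(2*σ)) - 1/2 ≤ stdCDF ((M - t)/σ) - stdCDF (-t/σ) := by
  rcases le_or_gt t (M/2) with h | h
  · have h1 : M/(2*σ) ≤ (M - t)/σ := by
      rw [div_le_div_iff₀ (by positivity) hσ]
      nlinarith
    have h2 : -t/σ ≤ 0 := by
      apply div_nonpos_of_nonpos_of_nonneg ?_ hσ.le
      linarith [ht.1]
    have := stdCDF_mono h1
    have h3 := stdCDF_mono h2
    rw [stdCDF_zero] at h3
    linarith
  · have h1 : (0:ℝ) ≤ (M - t)/σ := by
      apply div_nonneg ?_ hσ.le; linarith [ht.2]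
    have h2 : -t/σ ≤ -(M/(2*σ)) := by
      rw [div_le_iff₀ hσ]
      have : -(M/(2*σ)) * σ = -(M/2) := by field_simp
      rw [this]; linarith
    have h3 := stdCDF_mono h1
    rw [stdCDF_zero] at h3
    have h4 := stdCDF_mono h2
    have h5 : stdCDF (-(M/(2*σ))) = 1 - stdCDF (M/(2*σ)) := stdCDF_neg _
    rw [h5] at h4
    linarith

lemma mean_sep (σ M : ℝ) (hσ : 0 < σ) (hM : 0 < M) (s t : ℝ)
    (hs : s ∈ Set.Icc 0 M) (ht : t ∈ Set.Icc 0 M) (hst : s ≤ t) :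
    (stdCDF (M/(2*σ)) - 1/2) * (t - s) ≤ muExpl σ M t - muExpl σ M s := by
  rcases eq_or_lt_of_le hst with h | h
  · subst h; simp
  · obtain ⟨c, hc, hc2⟩ := exists_hasDerivAt_eq_slope (fun r => muExpl σ M r)
      (fun r => stdCDF ((M - r)/σ) - stdCDF (-r/σ)) h
      (fun x _ => (hasDerivAt_muExpl σ M hσ x).continuousAt.continuousWithinAt)
      (fun x _ => hasDerivAt_muExpl σ M hσ x)
    have hcmem : c ∈ Set.Icc 0 M := ⟨hs.1.trans hc.1.le, hc.2.le.trans ht.2⟩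
    have hlow := deriv_lower σ M hσ hM c hcmem
    have hts : 0 < t - s := by linarith
    have : (stdCDF (M/(2*σ)) - 1/2) ≤ (muExpl σ M t - muExpl σ M s) / (t - s) := by
      rw [← hc2]; exact hlow
    calc (stdCDF (M/(2*σ)) - 1/2) * (t - s) ≤ (muExpl σ M t - muExpl σ M s) / (t - s) * (t - s) :=
          mul_le_mul_of_nonneg_right this hts.le
      _ = muExpl σ M t - muExpl σ M s := div_mul_cancel₀ _ hts.ne'


/-- Core scalar inequality: the population loss gap dominates the squared
distance gap. -/
lemma core_scalar (σ M : ℝ) (hσ : 0 < σ) (hM : 0 < M) (r rstar : ℝ)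
    (hr : r ∈ Set.Icc 0 M) (hrs : rstar ∈ Set.Icc 0 M) :
    (stdCDF (M / (2 * σ)) - 1/2)^2 / (2 * M^2) * (r - rstar)^2
      ≤ popLoss σ M r rstar - popLoss σ M rstar rstar := by
  set c0 := stdCDF (M / (2 * σ)) - 1/2 with hc0
  have hc0nn : 0 ≤ c0 := by
    rw [hc0]
    have h1 : stdCDF 0 ≤ stdCDF (M / (2 * σ)) := stdCDF_mono (by positivity)
    rw [stdCDF_zero] at h1
    linarith
  set μs := muExpl σ M rstar with hμs
  set μr := muExpl σ M r with hμr
  set δ := μs - μr with hδ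
  set lam := 4 * δ / M^2 with hlam
  have hdv := dv_bound σ M r rstar lam hσ hM
  rw [cappedMean_eq σ M rstar hσ hM, ← hμs] at hdv
  have hhoef := log_Zf_le σ M r lam hσ hM
  rw [cappedMean_eq σ M r hσ hM, ← hμr] at hhoef
  have hKL : 2 * δ^2 / M^2 ≤ popLoss σ M r rstar - popLoss σ M rstar rstar := by
    have h1 : lam * μs - (lam * μr + lam^2 * M^2 / 8)
        ≤ popLoss σ M r rstar - popLoss σ M rstar rstar := by
      have := le_trans (sub_le_sub_left hhoef (lam * μs)) hdv
      linarith [this]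
    have h2 : lam * μs - (lam * μr + lam^2 * M^2 / 8) = 2 * δ^2 / M^2 := by
      rw [hlam, hδ]
      field_simp
      ring
    linarith
  have hsep : c0^2 * (r - rstar)^2 ≤ δ^2 := by
    rcases le_or_gt r rstar with h | h
    · have := mean_sep σ M hσ hM r rstar hr hrs h
      rw [← hμs, ← hμr, ← hc0] at this
      have hge : c0 * (rstar - r) ≤ δ := by rw [hδ]; linarith
      have hnn : 0 ≤ c0 * (rstar - r) := mul_nonneg hc0nn (by linarith)
      nlinarith
    · have := mean_sep σ M hσ hM rstar r hrs hr h.le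
      rw [← hμs, ← hμr, ← hc0] at this
      have hge : c0 * (r - rstar) ≤ -δ := by rw [hδ]; linarith
      have hnn : 0 ≤ c0 * (r - rstar) := mul_nonneg hc0nn (by linarith)
      nlinarith
  have hfinal : c0^2 / (2 * M^2) * (r - rstar)^2 ≤ 2 * δ^2 / M^2 := by
    rw [div_mul_eq_mul_div, div_le_div_iff₀ (by positivity) (by positivity)]
    nlinarith [sq_nonneg δ, sq_nonneg (c0 * (r - rstar))]
  linarith

lemma numPairs_nonneg (n : ℕ) : 0 ≤ numPairs n := by
  rcases n with _ | m
  · simp [numPairs]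
  · have hm : (0:ℝ) ≤ (m:ℝ) := Nat.cast_nonneg m
    rw [numPairs]
    push_cast
    nlinarith

lemma rdist_mem_Icc {n d : ℕ} (M : ℝ) (hM : Real.sqrt d ≤ M) (X : Fin n → Fin d → ℝ)
    (hX : X ∈ cube n d) (i j : Fin n) : rdist X i j ∈ Set.Icc 0 M := by
  constructor
  · exact Real.sqrt_nonneg _
  · rw [rdist, eDist]
    have hsum : ∑ k, (X i k - X j k)^2 ≤ (d : ℝ) := by
      have hterm : ∀ k : Fin d, (X i k - X j k)^2 ≤ 1 := by
        intro k
        have h1 := hX i k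
        have h2 := hX j k
        rw [Set.mem_Icc] at h1 h2
        nlinarith [h1.1, h1.2, h2.1, h2.2]
      calc ∑ k, (X i k - X j k)^2 ≤ ∑ _k : Fin d, (1:ℝ) := Finset.sum_le_sum (fun k _ => hterm k)
        _ = (d : ℝ) := by simp
    calc Real.sqrt (∑ k, (X i k - X j k)^2) ≤ Real.sqrt d := Real.sqrt_le_sqrt hsum
      _ ≤ M := hM

/-- Lemma A.6: the population risk dominates the distance
discrepancy, with constant `c_sc = (Φ(M/(2σ)) - 1/2)² / (2M²)`. -/
theorem population_risk_dominates_distance_discrepancy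
    (d : ℕ) (hd : 1 ≤ d) (σ M : ℝ) (hσ : 0 < σ) (hM : Real.sqrt d ≤ M)
    (n : ℕ) (Xstar X : Fin n → Fin d → ℝ)
    (hXstar : Xstar ∈ cube n d) (hX : X ∈ cube n d) :
    (stdCDF (M / (2 * σ)) - 1 / 2) ^ 2 / (2 * M ^ 2) * distDiscrep X Xstar ≤
      popRisk σ M Xstar X - popRisk σ M Xstar Xstar := by
  have hd0 : (0:ℝ) < (d:ℝ) := by
    have : (1:ℝ) ≤ (d:ℝ) := by exact_mod_cast hd
    linarith
  have hM0 : 0 < M := lt_of_lt_of_le (Real.sqrt_pos.mpr hd0) hM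
  set c := (stdCDF (M / (2 * σ)) - 1 / 2) ^ 2 / (2 * M ^ 2) with hc
  have hcnn : 0 ≤ c := by rw [hc]; positivity
  have hNinv : 0 ≤ (numPairs n)⁻¹ := inv_nonneg.mpr (numPairs_nonneg n)
  rw [popRisk, popRisk, distDiscrep, ← mul_sub]
  rw [mul_left_comm]
  apply mul_le_mul_of_nonneg_left ?_ hNinv
  rw [pairSum, pairSum, pairSum, ← Finset.sum_sub_distrib, Finset.mul_sum]
  apply Finset.sum_le_sum
  intro i _
  rw [← Finset.sum_sub_distrib, Finset.mul_sum]
  apply Finset.sum_le_sum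
  intro j _
  by_cases hij : i < j
  · simp only [hij, if_true]
    exact core_scalar σ M hσ hM0 (rdist X i j) (rdist Xstar i j)
      (rdist_mem_Icc M hM X hX i j) (rdist_mem_Icc M hM Xstar hXstar i j)
  · simp [hij]
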